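/- Let s ≥ 1, let K be a number field of degree 3s with exactly s real embeddings and 2s complex (non-real) embeddings, with embeddings enumerated σ_1, …, σ_{3s} : K → ℂ so that σ_1, …, σ_s are the real embeddings and σ_{2s+j} = conj ∘ σ_{s+j} for j = 1, …, s. Let U ⊆ 𝓞_K^× be a subgroup which is admissible and satisfies the pluriclosed condition. Then for all natural numbers p and m, the number of pairs of subsets (I, J) with I ⊆ {1, …, 2s}, J ⊆ {s+1, …, 2s}, |I| = p, |J| = m, such that ∏_{i∈I} σ_i(u) · ∏_{j∈J} conj(σ_j(u)) = 1 for all u ∈ U, equals the binomial coefficient C(s, p/2) if p is even and m = p/2, and equals 0 otherwise. -/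

import Mathlib

open NumberField

/-- A labeling of the embeddings of a number field `K` of degree `3s` with `s` real and `2s`
complex (non-real) embeddings: an enumeration `σ 0, …, σ (3s-1)` of all field embeddings
`K → ℂ` such that `σ 0, …, σ (s-1)` are exactly the real embeddings and
`σ (2s+j) = conj ∘ σ (s+j)` for `j = 0, …, s-1`.  (Indices are `0`-based.) -/
structure EmbeddingLabeling (K : Type*) [Field K] (s : ℕ) where
  σ : ℕ → (K →+* ℂ)
  inj : ∀ i < 3 * s, ∀ j < 3 * s, σ i = σ j → i = j
  surj : ∀ φ : K →+* ℂ, ∃ i < 3 * s, σ i = φ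
  isReal : ∀ i < s, ComplexEmbedding.IsReal (σ i)
  notReal : ∀ i, s ≤ i → i < 3 * s → ¬ ComplexEmbedding.IsReal (σ i)
  conjRel : ∀ j < s, σ (2 * s + j) = ComplexEmbedding.conjugate (σ (s + j))

/-- A subgroup `U ≤ 𝓞_K^×` is *admissible* if it contains units `u 0, …, u (s-1)` for which
the `s×s` matrix `(log σ_j(u_i))` is nonsingular. -/
def IsAdmissible {K : Type*} [Field K] {s : ℕ}
    (L : EmbeddingLabeling K s) (U : Subgroup (𝓞 K)ˣ) : Prop :=
  ∃ u : Fin s → (𝓞 K)ˣ, (∀ i, u i ∈ U) ∧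
    (Matrix.of fun i j : Fin s =>
      Real.log ((L.σ j (algebraMap (𝓞 K) K (u i))).re)).det ≠ 0

/-- A subgroup `U ≤ 𝓞_K^×` satisfies the *pluriclosed condition* if
`σ_j(u)·|σ_{s+j}(u)|² = 1` for every `u ∈ U` and every `j ∈ {0,…,s-1}`. -/
def IsPluriclosed {K : Type*} [Field K] {s : ℕ}
    (L : EmbeddingLabeling K s) (U : Subgroup (𝓞 K)ˣ) : Prop :=
  ∀ u ∈ U, ∀ j < s, L.σ j (algebraMap (𝓞 K) K (u : (𝓞 K)ˣ)) *
    (‖L.σ (s + j) (algebraMap (𝓞 K) K (u : (𝓞 K)ˣ))‖ : ℂ) ^ 2 = 1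


section Aux
variable {K : Type*} [Field K] [NumberField K] {s : ℕ}

lemma emb_ne_zero (φ : K →+* ℂ) (u : (𝓞 K)ˣ) :
    φ (algebraMap (𝓞 K) K (u : (𝓞 K)ˣ)) ≠ 0 :=
  (φ.isUnit_map ((algebraMap (𝓞 K) K).isUnit_map u.isUnit)).ne_zero

lemma real_emb_re (L : EmbeddingLabeling K s) {j : ℕ} (hj : j < s) (x : K) :
    ((L.σ j x).re : ℂ) = L.σ j x :=
  Complex.conj_eq_iff_re.mp (RingHom.congr_fun (L.isReal j hj) x)

lemma pc_re (L : EmbeddingLabeling K s) (U : Subgroup (𝓞 K)ˣ) (hpc : IsPluriclosed L U)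
    {u : (𝓞 K)ˣ} (hu : u ∈ U) {j : ℕ} (hj : j < s) :
    (L.σ j (algebraMap (𝓞 K) K (u : (𝓞 K)ˣ))).re *
      (‖L.σ (s + j) (algebraMap (𝓞 K) K (u : (𝓞 K)ˣ))‖)^2 = 1 := by
  have h := hpc u hu j hj
  rw [← real_emb_re L hj] at h
  exact_mod_cast h

lemma pc_pos (L : EmbeddingLabeling K s) (U : Subgroup (𝓞 K)ˣ) (hpc : IsPluriclosed L U)
    {u : (𝓞 K)ˣ} (hu : u ∈ U) {j : ℕ} (hj : j < s) :
    0 < (L.σ j (algebraMap (𝓞 K) K (u : (𝓞 K)ˣ))).re := by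
  have h := pc_re L U hpc hu hj
  nlinarith [sq_nonneg (‖L.σ (s + j) (algebraMap (𝓞 K) K (u : (𝓞 K)ˣ))‖)]

lemma log_abs_lo (L : EmbeddingLabeling K s) (U : Subgroup (𝓞 K)ˣ) (hpc : IsPluriclosed L U)
    {u : (𝓞 K)ˣ} (hu : u ∈ U) {j : ℕ} (hj : j < s) :
    Real.log (‖L.σ j (algebraMap (𝓞 K) K (u : (𝓞 K)ˣ))‖) =
      Real.log ((L.σ j (algebraMap (𝓞 K) K (u : (𝓞 K)ˣ))).re) := by
  have h0 := (real_emb_re L hj (algebraMap (𝓞 K) K (u : (𝓞 K)ˣ))).symm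
  rw [congrArg norm h0, Complex.norm_real, Real.norm_eq_abs, abs_of_pos (pc_pos L U hpc hu hj)]

lemma log_abs_hi (L : EmbeddingLabeling K s) (U : Subgroup (𝓞 K)ˣ) (hpc : IsPluriclosed L U)
    {u : (𝓞 K)ˣ} (hu : u ∈ U) {j : ℕ} (hj : j < s) :
    Real.log (‖L.σ (s + j) (algebraMap (𝓞 K) K (u : (𝓞 K)ˣ))‖) =
      -(Real.log ((L.σ j (algebraMap (𝓞 K) K (u : (𝓞 K)ˣ))).re)) / 2 := by
  have h := pc_re L U hpc hu hj
  have hre := pc_pos L U hpc hu (j := j) hj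
  have habs : (0:ℝ) < ‖L.σ (s + j) (algebraMap (𝓞 K) K (u : (𝓞 K)ˣ))‖ :=
    norm_pos_iff.mpr (emb_ne_zero _ u)
  have := congrArg Real.log h
  rw [Real.log_mul (ne_of_gt hre) (by positivity), Real.log_pow, Real.log_one] at this
  push_cast at this
  linarith

end Aux


section Main
variable {K : Type*} [Field K] [NumberField K] {s : ℕ}

lemma key_sum (L : EmbeddingLabeling K s) (U : Subgroup (𝓞 K)ˣ) (hpc : IsPluriclosed L U)
    (I J : Finset ℕ) (hI : I ⊆ Finset.range (2 * s)) (hJ : J ⊆ Finset.Ico s (2 * s))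
    {u : (𝓞 K)ˣ} (hu : u ∈ U)
    (h : (∏ i ∈ I, L.σ i (algebraMap (𝓞 K) K (u : (𝓞 K)ˣ))) *
      ∏ j ∈ J, (starRingEnd ℂ) (L.σ j (algebraMap (𝓞 K) K (u : (𝓞 K)ˣ))) = 1) :
    ∑ j ∈ Finset.range s,
      ((if j ∈ I then (1:ℝ) else 0)
        - ((if s + j ∈ I then (1:ℝ) else 0) + (if s + j ∈ J then (1:ℝ) else 0)) / 2) *
        Real.log ((L.σ j (algebraMap (𝓞 K) K (u : (𝓞 K)ˣ))).re) = 0 := by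
  set x := algebraMap (𝓞 K) K (u : (𝓞 K)ˣ) with hx
  set g : ℕ → ℝ := fun i => Real.log (‖L.σ i x‖) with hg
  have hne : ∀ i : ℕ, ‖L.σ i x‖ ≠ 0 := fun i =>
    norm_ne_zero_iff.mpr (emb_ne_zero _ u)
  have habs : (∏ i ∈ I, ‖L.σ i x‖) * ∏ j ∈ J, ‖L.σ j x‖ = 1 := by
    have h2 := congrArg norm h
    rw [norm_mul, norm_prod, norm_prod, norm_one] at h2
    simpa [Complex.norm_conj] using h2
  have hlog : (∑ i ∈ I, g i) + ∑ j ∈ J, g j = 0 := by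
    have h2 := congrArg Real.log habs
    rw [Real.log_mul (Finset.prod_ne_zero_iff.mpr fun i _ => hne i)
        (Finset.prod_ne_zero_iff.mpr fun i _ => hne i),
      Real.log_prod (fun i _ => hne i), Real.log_prod (fun i _ => hne i),
      Real.log_one] at h2
    exact h2
  have esplit : ∀ f : ℕ → ℝ, ∑ i ∈ Finset.range (2 * s), f i =
      ∑ i ∈ Finset.range s, f i + ∑ j ∈ Finset.range s, f (s + j) := by
    intro f
    have h1 : ∑ i ∈ Finset.Ico s (2 * s), f i = ∑ j ∈ Finset.range s, f (s + j) := by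
      rw [Finset.sum_Ico_eq_sum_range]
      have h2 : 2 * s - s = s := by omega
      rw [h2]
    rw [Finset.range_eq_Ico, ← Finset.sum_Ico_consecutive f (Nat.zero_le s) (by omega),
      ← Finset.range_eq_Ico, h1]
  have eI : ∑ i ∈ I, g i = ∑ i ∈ Finset.range (2 * s), (if i ∈ I then g i else 0) := by
    rw [Finset.sum_ite_mem, Finset.inter_eq_right.mpr hI]
  have eJ : ∑ j ∈ J, g j = ∑ j ∈ Finset.range s, (if s + j ∈ J then g (s + j) else 0) := by
    have e0 : ∑ j ∈ J, g j = ∑ j ∈ Finset.Ico s (2 * s), (if j ∈ J then g j else 0) := by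
      rw [Finset.sum_ite_mem, Finset.inter_eq_right.mpr hJ]
    rw [e0, Finset.sum_Ico_eq_sum_range]
    have h2 : 2 * s - s = s := by omega
    rw [h2]
  rw [eI, eJ, esplit] at hlog
  rw [← Finset.sum_add_distrib, ← Finset.sum_add_distrib] at hlog
  refine Eq.trans (Finset.sum_congr rfl fun j hj => ?_) hlog
  have hjs := Finset.mem_range.mp hj
  rw [show g j = Real.log ((L.σ j x).re) from log_abs_lo L U hpc hu hjs,
      show g (s + j) = -(Real.log ((L.σ j x).re)) / 2 from log_abs_hi L U hpc hu hjs]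
  split_ifs <;> ring

lemma coeff_vanish (L : EmbeddingLabeling K s) (U : Subgroup (𝓞 K)ˣ)
    (hadm : IsAdmissible L U) (c : Fin s → ℝ)
    (hc : ∀ u ∈ U, ∑ j : Fin s, c j *
      Real.log ((L.σ j (algebraMap (𝓞 K) K (u : (𝓞 K)ˣ))).re) = 0) : c = 0 := by
  obtain ⟨v, hv, hdet⟩ := hadm
  apply Matrix.eq_zero_of_mulVec_eq_zero hdet
  funext i
  have := hc (v i) (hv i)
  simpa [Matrix.mulVec, dotProduct, mul_comm] using this

lemma prod_pc_one (L : EmbeddingLabeling K s) (U : Subgroup (𝓞 K)ˣ) (hpc : IsPluriclosed L U)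
    (T : Finset ℕ) (hT : T ⊆ Finset.range s) {u : (𝓞 K)ˣ} (hu : u ∈ U) :
    (∏ i ∈ T ∪ T.image (· + s), L.σ i (algebraMap (𝓞 K) K (u : (𝓞 K)ˣ))) *
      ∏ j ∈ T.image (· + s), (starRingEnd ℂ)
        (L.σ j (algebraMap (𝓞 K) K (u : (𝓞 K)ˣ))) = 1 := by
  set x := algebraMap (𝓞 K) K (u : (𝓞 K)ˣ) with hx
  have hinj : Function.Injective (· + s) := add_left_injective s
  have hdisj : Disjoint T (T.image (· + s)) := by
    rw [Finset.disjoint_left]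
    intro a ha hb
    obtain ⟨b, hbT, rfl⟩ := Finset.mem_image.mp hb
    have := Finset.mem_range.mp (hT ha)
    omega
  rw [Finset.prod_union hdisj, Finset.prod_image (fun a _ b _ => fun hab => hinj hab),
    Finset.prod_image (fun a _ b _ => fun hab => hinj hab), mul_assoc,
    ← Finset.prod_mul_distrib, ← Finset.prod_mul_distrib]
  apply Finset.prod_eq_one
  intro j hj
  have hjs := Finset.mem_range.mp (hT hj)
  have h := hpc u hu j hjs
  rw [Complex.mul_conj, Complex.normSq_eq_norm_sq]
  rw [show j + s = s + j from Nat.add_comm j s]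
  rw [← h]
  push_cast
  ring

end Main


section Cnt
variable {K : Type*} [Field K] [NumberField K] {s : ℕ}

lemma shift_disjoint (s : ℕ) (T : Finset ℕ) (hT : T ⊆ Finset.range s) :
    Disjoint T (T.image (· + s)) := by
  rw [Finset.disjoint_left]
  intro a ha hb
  obtain ⟨b, hbT, rfl⟩ := Finset.mem_image.mp hb
  have := Finset.mem_range.mp (hT ha)
  omega

lemma forward_char (L : EmbeddingLabeling K s) (U : Subgroup (𝓞 K)ˣ)
    (hadm : IsAdmissible L U) (hpc : IsPluriclosed L U)
    (I J : Finset ℕ) (hI : I ⊆ Finset.range (2 * s)) (hJ : J ⊆ Finset.Ico s (2 * s))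
    (hprod : ∀ u ∈ U, (∏ i ∈ I, L.σ i (algebraMap (𝓞 K) K (u : (𝓞 K)ˣ))) *
        ∏ j ∈ J, (starRingEnd ℂ) (L.σ j (algebraMap (𝓞 K) K (u : (𝓞 K)ˣ))) = 1) :
    ∃ T : Finset ℕ, T ⊆ Finset.range s ∧ I = T ∪ T.image (· + s) ∧ J = T.image (· + s) := by
  have hzero : ∀ j : Fin s, (if (j:ℕ) ∈ I then (1:ℝ) else 0)
      - ((if s + (j:ℕ) ∈ I then (1:ℝ) else 0) + (if s + (j:ℕ) ∈ J then (1:ℝ) else 0)) / 2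
      = 0 := by
    have hc0 := coeff_vanish L U hadm (fun j : Fin s =>
      (if (j:ℕ) ∈ I then (1:ℝ) else 0)
        - ((if s + (j:ℕ) ∈ I then (1:ℝ) else 0) + (if s + (j:ℕ) ∈ J then (1:ℝ) else 0)) / 2)
      (by
        intro u hu
        have h := key_sum L U hpc I J hI hJ hu (hprod u hu)
        rw [← Fin.sum_univ_eq_sum_range] at h
        exact h)
    intro j
    simpa using congrFun hc0 j
  have hiff : ∀ j, j < s → ((j ∈ I ↔ s + j ∈ I) ∧ (j ∈ I ↔ s + j ∈ J)) := by
    intro j hj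
    have h0 := hzero ⟨j, hj⟩
    simp only [Fin.val_mk] at h0
    by_cases h1 : j ∈ I <;> by_cases h2 : s + j ∈ I <;> by_cases h3 : s + j ∈ J <;>
      simp only [h1, h2, h3, if_true, if_false] <;>
      simp only [h1, h2, h3, if_true, if_false] at h0 <;>
      first
        | (exact ⟨Iff.rfl, Iff.rfl⟩)
        | tauto
        | norm_num at h0
  refine ⟨I ∩ Finset.range s, Finset.inter_subset_right, ?_, ?_⟩
  · ext a
    simp only [Finset.mem_union, Finset.mem_image, Finset.mem_inter, Finset.mem_range]
    constructor
    · intro ha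
      have ha2 := Finset.mem_range.mp (hI ha)
      by_cases hlt : a < s
      · exact Or.inl ⟨ha, hlt⟩
      · right
        refine ⟨a - s, ⟨?_, by omega⟩, by omega⟩
        exact (hiff (a - s) (by omega)).1.mpr (by rwa [show s + (a - s) = a by omega])
    · rintro (⟨ha, _⟩ | ⟨b, ⟨hbI, hbs⟩, rfl⟩)
      · exact ha
      · rw [Nat.add_comm b s]
        exact (hiff b hbs).1.mp hbI
  · ext a
    simp only [Finset.mem_image, Finset.mem_inter, Finset.mem_range]
    constructor
    · intro ha
      have ha2 := Finset.mem_Ico.mp (hJ ha)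
      refine ⟨a - s, ⟨?_, by omega⟩, by omega⟩
      exact (hiff (a - s) (by omega)).2.mpr (by rwa [show s + (a - s) = a by omega])
    · rintro ⟨b, ⟨hbI, hbs⟩, rfl⟩
      rw [Nat.add_comm b s]
      exact (hiff b hbs).2.mp hbI

end Cnt

/-- Let `s ≥ 1` and let `K` be a number field of degree `3s` with `s`
real and `2s` complex embeddings, labeled as above.  Let `U ≤ 𝓞_K^×` be admissible and
satisfy the pluriclosed condition.  For all `p, m`, the number of pairs `(I, J)` with
`I ⊆ {0,…,2s-1}`, `J ⊆ {s,…,2s-1}`, `|I| = p`, `|J| = m` and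
`∏_{i∈I} σ_i(u) · ∏_{j∈J} conj(σ_j(u)) = 1` for all `u ∈ U`, equals `C(s, p/2)` if `p`
is even and `m = p/2`, and `0` otherwise. -/
theorem count_dolbeault_relations_eq_choose
    (s : ℕ) (hs : 1 ≤ s)
    (K : Type*) [Field K] [NumberField K]
    (hdeg : Module.finrank ℚ K = 3 * s)
    (L : EmbeddingLabeling K s) (U : Subgroup (𝓞 K)ˣ)
    (hadm : IsAdmissible L U) (hpc : IsPluriclosed L U) :
    ∀ p m : ℕ,
      {IJ : Finset ℕ × Finset ℕ |
        IJ.1 ⊆ Finset.range (2 * s) ∧ IJ.2 ⊆ Finset.Ico s (2 * s) ∧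
        IJ.1.card = p ∧ IJ.2.card = m ∧
        ∀ u ∈ U, (∏ i ∈ IJ.1, L.σ i (algebraMap (𝓞 K) K (u : (𝓞 K)ˣ))) *
          ∏ j ∈ IJ.2, (starRingEnd ℂ) (L.σ j (algebraMap (𝓞 K) K (u : (𝓞 K)ˣ))) = 1}.ncard =
      if 2 ∣ p ∧ m = p / 2 then s.choose (p / 2) else 0 := by
  intro p m
  have hinj : Function.Injective (· + s : ℕ → ℕ) := add_left_injective s
  by_cases hcond : 2 ∣ p ∧ m = p / 2
  · rw [if_pos hcond]
    obtain ⟨hp2, hm⟩ := hcond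
    have hpm : p = 2 * m := by omega
    have hset : {IJ : Finset ℕ × Finset ℕ |
        IJ.1 ⊆ Finset.range (2 * s) ∧ IJ.2 ⊆ Finset.Ico s (2 * s) ∧
        IJ.1.card = p ∧ IJ.2.card = m ∧
        ∀ u ∈ U, (∏ i ∈ IJ.1, L.σ i (algebraMap (𝓞 K) K (u : (𝓞 K)ˣ))) *
          ∏ j ∈ IJ.2, (starRingEnd ℂ) (L.σ j (algebraMap (𝓞 K) K (u : (𝓞 K)ˣ))) = 1} =
        ↑((Finset.powersetCard m (Finset.range s)).image
          (fun T => (T ∪ T.image (· + s), T.image (· + s)))) := by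
      ext ⟨I, J⟩
      simp only [Set.mem_setOf_eq, Finset.coe_image, Set.mem_image, Finset.mem_coe,
        Finset.mem_powersetCard, Prod.mk.injEq]
      constructor
      · rintro ⟨hI, hJ, hIcard, hJcard, hprod⟩
        obtain ⟨T, hT, hIT, hJT⟩ := forward_char L U hadm hpc I J hI hJ hprod
        refine ⟨T, ⟨hT, ?_⟩, hIT.symm, hJT.symm⟩
        rw [← hJcard, hJT, Finset.card_image_of_injective _ hinj]
      · rintro ⟨T, ⟨hT, hTcard⟩, hIT, hJT⟩
        subst hIT; subst hJT
        refine ⟨?_, ?_, ?_, ?_, fun u hu => prod_pc_one L U hpc T hT hu⟩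
        · intro a ha
          rcases Finset.mem_union.mp ha with h | h
          · have := Finset.mem_range.mp (hT h)
            exact Finset.mem_range.mpr (by omega)
          · obtain ⟨b, hbT, rfl⟩ := Finset.mem_image.mp h
            have := Finset.mem_range.mp (hT hbT)
            exact Finset.mem_range.mpr (by omega)
        · intro a ha
          obtain ⟨b, hbT, rfl⟩ := Finset.mem_image.mp ha
          have := Finset.mem_range.mp (hT hbT)
          exact Finset.mem_Ico.mpr (by omega)
        · rw [Finset.card_union_of_disjoint (shift_disjoint s T hT),
            Finset.card_image_of_injective _ hinj, hTcard]
          omega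
        · rw [Finset.card_image_of_injective _ hinj, hTcard]
    rw [hset, Set.ncard_coe_finset]
    have hfinj : Function.Injective
        (fun T : Finset ℕ => (T ∪ T.image (· + s), T.image (· + s))) := by
      intro T T' h
      have h2 := congrArg Prod.snd h
      simp only at h2
      exact Finset.image_injective hinj h2
    rw [Finset.card_image_of_injective _ hfinj, Finset.card_powersetCard, Finset.card_range, hm]
  · rw [if_neg hcond]
    have hempty : {IJ : Finset ℕ × Finset ℕ |
        IJ.1 ⊆ Finset.range (2 * s) ∧ IJ.2 ⊆ Finset.Ico s (2 * s) ∧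
        IJ.1.card = p ∧ IJ.2.card = m ∧
        ∀ u ∈ U, (∏ i ∈ IJ.1, L.σ i (algebraMap (𝓞 K) K (u : (𝓞 K)ˣ))) *
          ∏ j ∈ IJ.2, (starRingEnd ℂ) (L.σ j (algebraMap (𝓞 K) K (u : (𝓞 K)ˣ))) = 1} = ∅ := by
      rw [Set.eq_empty_iff_forall_notMem]
      rintro ⟨I, J⟩ ⟨hI, hJ, hIcard, hJcard, hprod⟩
      obtain ⟨T, hT, hIT, hJT⟩ := forward_char L U hadm hpc I J hI hJ hprod
      apply hcond
      have hJc : m = T.card := by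
        rw [← hJcard, hJT, Finset.card_image_of_injective _ hinj]
      have hIc : p = 2 * T.card := by
        rw [← hIcard, hIT, Finset.card_union_of_disjoint (shift_disjoint s T hT),
          Finset.card_image_of_injective _ hinj]
        omega
      exact ⟨by omega, by omega⟩
    rw [hempty]
    exact Set.ncard_empty _
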